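/- Let G be a graph of order n with η(G) = n−3, i.e., the adjacency matrix of G has exactly three nonzero eigenvalues. Then p(G) = 1, and consequently G ≅ K_{n_1,n_2,n_3} ∪ rK_1, the disjoint union of a complete tripartite graph and r isolated vertices, where n_1 + n_2 + n_3 + r = n. -/

import Mathlib

open Matrix BigOperators

namespace TwoPosEig

variable {V : Type*}

/-- The real adjacency matrix of a simple graph (classical decidability). -/
noncomputable def adjMat [Fintype V] [DecidableEq V] (G : SimpleGraph V) : Matrix V V ℝ :=
  letI := Classical.decRel G.Adj
  G.adjMatrix ℝ

lemma adjMat_isHermitian [Fintype V] [DecidableEq V] (G : SimpleGraph V) :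
    (adjMat G).IsHermitian := by
  letI := Classical.decRel G.Adj
  rw [Matrix.IsHermitian, Matrix.conjTranspose_eq_transpose_of_trivial]
  exact SimpleGraph.isSymm_adjMatrix G

/-- The eigenvalues of (the adjacency matrix of) a graph, as a function on vertices. -/
noncomputable def eigs [Fintype V] [DecidableEq V] (G : SimpleGraph V) : V → ℝ :=
  (adjMat_isHermitian G).eigenvalues

/-- `p(G)`: the number of positive eigenvalues (with multiplicity). -/
noncomputable def posCount [Finite V] (G : SimpleGraph V) : ℕ :=
  letI := Fintype.ofFinite V
  letI := Classical.decEq V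
  Nat.card {i : V // 0 < eigs G i}

/-- `η(G)`: the number of zero eigenvalues (with multiplicity), the nullity. -/
noncomputable def nullCount [Finite V] (G : SimpleGraph V) : ℕ :=
  letI := Fintype.ofFinite V
  letI := Classical.decEq V
  Nat.card {i : V // eigs G i = 0}

/-- `λ_k(G)`: the `k`-th largest eigenvalue (1-indexed); junk value `0` out of range. -/
noncomputable def lam [Finite V] (G : SimpleGraph V) (k : ℕ) : ℝ :=
  letI := Fintype.ofFinite V
  letI := Classical.decEq V
  (((Finset.univ.val.map (eigs G)).sort (· ≤ ·)).reverse).getD (k - 1) 0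

/-- Membership in `𝒢^s(n)` (the order `n` being the cardinality of the vertex type):
`p(G) = 2` and `η(G) = s`. -/
def memClass [Finite V] (s : ℕ) (G : SimpleGraph V) : Prop :=
  posCount G = 2 ∧ nullCount G = s

/-- `v` is a congruent vertex of I-type: some other vertex `u`, non-adjacent to `v`,
has the same neighbourhood. -/
def ITypeVertex (G : SimpleGraph V) (v : V) : Prop :=
  ∃ u, u ≠ v ∧ ¬ G.Adj u v ∧ G.neighborSet u = G.neighborSet v

/-- `u` is a congruent vertex of II-type: there are two non-adjacent vertices `v, w`
such that `N(u)` is a disjoint union of `N(v)` and `N(w)`. -/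
def IITypeVertex (G : SimpleGraph V) (u : V) : Prop :=
  ∃ v w, v ≠ w ∧ ¬ G.Adj v w ∧ Disjoint (G.neighborSet v) (G.neighborSet w) ∧
    G.neighborSet u = G.neighborSet v ∪ G.neighborSet w

/-- `u v x y` is a congruent (induced) quadrangle with congruent edges `uv`, `xy`. -/
def CongruentQuad (G : SimpleGraph V) (u v x y : V) : Prop :=
  u ≠ v ∧ u ≠ x ∧ u ≠ y ∧ v ≠ x ∧ v ≠ y ∧ x ≠ y ∧
  G.Adj u v ∧ G.Adj v x ∧ G.Adj x y ∧ G.Adj y u ∧ ¬ G.Adj u x ∧ ¬ G.Adj v y ∧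
  G.neighborSet u \ {y, v} = G.neighborSet v \ {u, x} ∧
  G.neighborSet x \ {v, y} = G.neighborSet y \ {x, u}

/-- A congruent vertex of III-type: a vertex of some congruent quadrangle. -/
def IIITypeVertex (G : SimpleGraph V) (z : V) : Prop :=
  ∃ u v x y, CongruentQuad G u v x y ∧ (z = u ∨ z = v ∨ z = x ∨ z = y)

/-- Membership in `𝒢_1^s(n)`: a connected graph obtained by adding a congruent vertex
of I-type to some graph in `𝒢^{s-1}(n-1)`. -/
def memG1 {n : ℕ} (s : ℕ) (G : SimpleGraph (Fin n)) : Prop :=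
  G.Connected ∧ ∃ v : Fin n, ITypeVertex G v ∧ memClass (s - 1) (G.induce {v}ᶜ)

/-- Membership in `𝒢_2^s(n)`. -/
def memG2 {n : ℕ} (s : ℕ) (G : SimpleGraph (Fin n)) : Prop :=
  G.Connected ∧ ∃ v : Fin n, IITypeVertex G v ∧ memClass (s - 1) (G.induce {v}ᶜ)

/-- Membership in `𝒢_3^s(n)`. -/
def memG3 {n : ℕ} (s : ℕ) (G : SimpleGraph (Fin n)) : Prop :=
  G.Connected ∧ ∃ v : Fin n, IIITypeVertex G v ∧ memClass (s - 1) (G.induce {v}ᶜ)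

/-- Oboudi's graph `G_m`: two cliques `K_{⌈m/2⌉}` (on `v_1, …`) and `K_{⌊m/2⌋}`
(on `w_1, …`), where `v_i ∼ w_j` iff `j ≥ ⌊m/2⌋ - i + 2` (1-indexed), i.e. (0-indexed)
`⌊m/2⌋ ≤ i + j`. -/
def oboudi (m : ℕ) : SimpleGraph (Fin ((m + 1) / 2) ⊕ Fin (m / 2)) :=
  SimpleGraph.fromRel fun a b =>
    match a, b with
    | Sum.inl _, Sum.inl _ => True
    | Sum.inr _, Sum.inr _ => True
    | Sum.inl i, Sum.inr j => m / 2 ≤ (i : ℕ) + (j : ℕ)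
    | Sum.inr _, Sum.inl _ => False

/-- The generalized lexicographic product `G[K_{t v}]`: each vertex `v` is replaced by a
clique of order `t v`, with complete joins along edges of `G`. -/
def lexProd (G : SimpleGraph V) (t : V → ℕ) : SimpleGraph (Σ v : V, Fin (t v)) :=
  SimpleGraph.fromRel fun a b => a.1 = b.1 ∨ G.Adj a.1 b.1

/-- Index conversion identifying the vertices `v_1, …, v_{⌈k/2⌉}, w_1, …, w_{⌊k/2⌋}`
of `G_k` with `Fin k` (in this order). -/
def toIdx {k : ℕ} : Fin ((k + 1) / 2) ⊕ Fin (k / 2) → Fin k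
  | Sum.inl i => ⟨(i : ℕ), by have := i.isLt; omega⟩
  | Sum.inr j => ⟨(k + 1) / 2 + (j : ℕ), by have := j.isLt; omega⟩

/-- `B_k(n_1, …, n_k) = G_k[K_{n_1}, …, K_{n_k}]`. -/
def bGraph (k : ℕ) (nn : Fin k → ℕ) :
    SimpleGraph (Σ v : Fin ((k + 1) / 2) ⊕ Fin (k / 2), Fin (nn (toIdx v))) :=
  lexProd (oboudi k) fun v => nn (toIdx v)

/-- Membership in `𝓓* = {B_k(n_1,…,n_k) ∈ 𝓑_k^{00}(n) : 4 ≤ k ≤ 14, n ≤ 14}` (up to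
isomorphism). -/
def memDstar {n : ℕ} (G : SimpleGraph (Fin n)) : Prop :=
  ∃ (k : ℕ) (nn : Fin k → ℕ), 4 ≤ k ∧ k ≤ 14 ∧ (∀ i, 1 ≤ nn i) ∧ (∑ i, nn i) ≤ 14 ∧
    lam (bGraph k nn) 3 = 0 ∧ lam (bGraph k nn) 4 = 0 ∧ Nonempty (G ≃g bGraph k nn)

/-- The degree of a vertex. -/
noncomputable def deg [Finite V] (G : SimpleGraph V) (v : V) : ℕ :=
  Nat.card (G.neighborSet v)

/-- `v` is a vertex of minimum degree. -/
def IsMinDegVertex [Finite V] (G : SimpleGraph V) (v : V) : Prop :=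
  ∀ w, deg G v ≤ deg G w

/-- The set `Y = V(G) ∖ N[v]`. -/
def Yset (G : SimpleGraph V) (v : V) : Set V :=
  (G.neighborSet v ∪ {v})ᶜ

/-- `G` is `X`-complete with respect to `v`: `G[Y] ≅ K_{n-t-1}` with `n-t-1 ≥ 2`
and `G[X]` is complete, where `X = N(v)`, `Y = V(G) ∖ N[v]`. -/
def IsXComplete [Finite V] (G : SimpleGraph V) (v : V) : Prop :=
  2 ≤ (Yset G v).ncard ∧ (Yset G v).Pairwise G.Adj ∧ (G.neighborSet v).Pairwise G.Adj

/-- An `X`-complete graph is reduced when the traces on `Y` of the neighbourhoods of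
vertices of `X` form a chain. -/
def IsReduced (G : SimpleGraph V) (v : V) : Prop :=
  ∀ x ∈ G.neighborSet v, ∀ x' ∈ G.neighborSet v,
    G.neighborSet x ∩ Yset G v ⊆ G.neighborSet x' ∩ Yset G v ∨
    G.neighborSet x' ∩ Yset G v ⊆ G.neighborSet x ∩ Yset G v


/-!
Exactly three eigenvalues of `A = A(G)` are nonzero. Their sum is `tr A = 0` and the sum of
their cubes is `tr A³ ≥ 0`, which counts closed walks of length 3. For three numbers summing
to zero the sum of cubes is three times their product, so the product is positive: exactly one
eigenvalue is positive, and `tr A³ > 0` yields a triangle.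

The triangle has as many vertices as `rank A = 3`, and its rows are linearly independent, so
they span the row space. Writing the row of any vertex `x` as a combination of them and
comparing the entries on the triangle and at `x` itself forces that row to be zero or equal
to one of the three triangle rows. Grouping vertices by their rows gives the three parts and
the isolated vertices.
-/

end TwoPosEig

theorem Matrix.IsHermitian.trace_pow_eq_sum_eigenvalues_pow {𝕜 n : Type*} [RCLike 𝕜]
    [Fintype n] [DecidableEq n] {A : Matrix n n 𝕜} (hA : A.IsHermitian) (k : ℕ) :
    (A ^ k).trace = ∑ i, (hA.eigenvalues i : 𝕜) ^ k := by
  conv_lhs => rw [hA.spectral_theorem, ← map_pow, Unitary.conjStarAlgAut_apply, trace_mul_cycle,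
    Unitary.coe_star_mul_self, one_mul, diagonal_pow, trace_diagonal]
  simp

theorem pos_neg_neg_of_add_eq_zero_of_mul_pos {p q r : ℝ} (hs : p + q + r = 0)
    (hm : 0 < p * q * r) :
    (0 < p ∧ q < 0 ∧ r < 0) ∨ (p < 0 ∧ 0 < q ∧ r < 0) ∨ (p < 0 ∧ q < 0 ∧ 0 < r) := by
  simp only [mul_pos_iff, mul_neg_iff] at hm
  rcases hm with ⟨⟨hp, hq⟩ | ⟨hp, hq⟩, hr⟩ | ⟨⟨hp, hq⟩ | ⟨hp, hq⟩, hr⟩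
  · linarith
  · exact Or.inr (Or.inr ⟨hp, hq, hr⟩)
  · exact Or.inl ⟨hp, hq, hr⟩
  · exact Or.inr (Or.inl ⟨hp, hq, hr⟩)

theorem card_pos_eq_one_and_sum_pow_three_pos {ι : Type*} [Fintype ι] {f : ι → ℝ}
    (h3 : Fintype.card {i // f i ≠ 0} = 3) (h1 : ∑ i, f i = 0) (hcube : 0 ≤ ∑ i, f i ^ 3) :
    Fintype.card {i // 0 < f i} = 1 ∧ 0 < ∑ i, f i ^ 3 := by
  classical
  rw [Fintype.card_subtype] at h3
  obtain ⟨a, b, c, hab, hac, hbc, hsupp⟩ := Finset.card_eq_three.mp h3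
  have hne : ∀ i, f i ≠ 0 ↔ i = a ∨ i = b ∨ i = c := fun i => by
    simpa using congrArg (i ∈ ·) hsupp
  have hsum : ∀ k, k ≠ 0 → ∑ i, f i ^ k = f a ^ k + f b ^ k + f c ^ k := fun k hk => by
    rw [← Finset.sum_subset (Finset.subset_univ {a, b, c}) fun i _ hi => by
      rw [not_not.mp ((hne i).not.mpr (by simpa using hi)), zero_pow hk]]
    simp [Finset.sum_insert, hab, hac, hbc, add_assoc]
  have hs : f a + f b + f c = 0 := by
    have := hsum 1 one_ne_zero
    simp only [pow_one] at this
    rwa [this] at h1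
  have hcube_eq : ∑ i, f i ^ 3 = 3 * (f a * f b * f c) := by
    rw [hsum 3 three_ne_zero]
    linear_combination (f a ^ 2 + f b ^ 2 + f c ^ 2 - f a * f b - f b * f c - f a * f c) * hs
  have hprod : 0 < f a * f b * f c :=
    lt_of_le_of_ne (by linarith) (Ne.symm (by simp [(hne _).mpr]))
  refine ⟨?_, by linarith⟩
  have hunique : ∀ j, 0 < f j → (∀ i, 0 < f i → i = j) → Fintype.card {i // 0 < f i} = 1 :=
    fun j hj h => Fintype.card_eq_one_iff.mpr ⟨⟨j, hj⟩, fun i => Subtype.ext (h i i.2)⟩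
  rcases pos_neg_neg_of_add_eq_zero_of_mul_pos hs hprod with
    ⟨ha, hb, hc⟩ | ⟨ha, hb, hc⟩ | ⟨ha, hb, hc⟩ <;>
    [refine hunique a ha ?_; refine hunique b hb ?_; refine hunique c hc ?_] <;>
    intro i hi <;> rcases (hne i).mp hi.ne' with rfl | rfl | rfl <;> first | rfl | linarith

theorem exists_eq_single_of_sum_eq_one {ι : Type*} [Fintype ι] [DecidableEq ι] {g : ι → ℝ}
    (h01 : ∀ j, g j = 0 ∨ g j = 1) (hsum : ∑ i, g i = 1) : ∃ j, g = Pi.single j 1 := by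
  obtain ⟨j, -, hj⟩ := Finset.exists_ne_zero_of_sum_ne_zero (s := Finset.univ) (f := g)
    (by rw [hsum]; exact one_ne_zero)
  have hgj : g j = 1 := (h01 j).resolve_left hj
  refine ⟨j, funext fun i => ?_⟩
  rcases eq_or_ne i j with rfl | hij
  · simp [hgj]
  have hpair : g i + g j ≤ 1 := by
    rw [← Finset.sum_pair hij, ← hsum]
    exact Finset.sum_le_sum_of_subset_of_nonneg (Finset.subset_univ _)
      fun k _ _ => by rcases h01 k with h | h <;> simp [h]
  rcases h01 i with h | h
  · simp [h, hij]
  · linarith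

/-- The solutions of the system satisfied by the coefficients `g` expressing the row of a vertex
in terms of the rows of a clique, `a` being the restriction of that row to the clique. -/
theorem eq_zero_or_eq_single_of_sum_sub_eq {ι : Type*} [Fintype ι] [DecidableEq ι]
    (hι : Fintype.card ι ≠ 1) {g a : ι → ℝ} (ha : ∀ j, a j = 0 ∨ a j = 1)
    (hga : ∀ j, a j = ∑ i, g i - g j) (horth : ∑ i, g i * a i = 0) :
    g = 0 ∨ ∃ j, g = Pi.single j 1 := by
  set S := ∑ i, g i with hSdef
  have hg : ∀ j, g j = S - a j := fun j => by linarith [hga j]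
  have hS : S = Fintype.card ι * S - ∑ i, a i := by
    conv_lhs => rw [hSdef, Finset.sum_congr rfl fun j _ => hg j]
    simp [Finset.sum_sub_distrib]
  have hprod : (S - 1) * ∑ i, a i = 0 := by
    have : ∑ i, g i * a i = ∑ i, (S * a i - a i) := Finset.sum_congr rfl fun j _ => by
      rw [hg j]; rcases ha j with h | h <;> simp [h]
    rw [Finset.sum_sub_distrib, ← Finset.mul_sum, horth] at this
    linear_combination -this
  rcases mul_eq_zero.mp hprod with hS1 | hs0
  · right
    refine exists_eq_single_of_sum_eq_one (fun j => ?_) (by linarith)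
    rcases ha j with h | h
    · right; linarith [hg j]
    · left; linarith [hg j]
  · have ha0 : ∀ j, a j = 0 := fun j =>
      (Finset.sum_eq_zero_iff_of_nonneg (fun i _ => by rcases ha i with h | h <;> simp [h])).mp
        hs0 j (Finset.mem_univ j)
    have hk : (Fintype.card ι : ℝ) - 1 ≠ 0 := sub_ne_zero.mpr (by exact_mod_cast hι)
    have : S = 0 := (mul_eq_zero.mp (by linear_combination -hS + hs0)).resolve_left hk
    left
    funext j
    simp [hg j, ha0 j, this]

namespace SimpleGraph

variable {V W ι : Type*}

section Walk

variable [Fintype V] [DecidableEq V] (G : SimpleGraph V) [DecidableRel G.Adj]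

theorem trace_adjMatrix_pow_eq_sum_card_walk (k : ℕ) :
    (G.adjMatrix ℝ ^ k).trace = ∑ v, ((G.finsetWalkLength k v v).card : ℝ) := by
  simp [Matrix.trace, adjMatrix_pow_apply_eq_card_walk]

theorem trace_adjMatrix_pow_nonneg (k : ℕ) : 0 ≤ (G.adjMatrix ℝ ^ k).trace := by
  rw [trace_adjMatrix_pow_eq_sum_card_walk]
  positivity

theorem not_cliqueFree_three_of_trace_adjMatrix_pow_three_ne_zero
    (h : (G.adjMatrix ℝ ^ 3).trace ≠ 0) : ¬ G.CliqueFree 3 := by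
  rw [trace_adjMatrix_pow_eq_sum_card_walk] at h
  obtain ⟨v, -, hv⟩ := Finset.exists_ne_zero_of_sum_ne_zero h
  obtain ⟨p, hp⟩ := Finset.card_ne_zero.mp (by exact_mod_cast hv)
  rw [mem_finsetWalkLength_iff] at hp
  rcases p with _ | ⟨huv, _ | ⟨hvw, _ | ⟨hwu, _ | _⟩⟩⟩ <;> simp at hp
  exact (is3Clique_triple_iff.mpr ⟨huv, hwu.symm, hvw⟩).not_cliqueFree

end Walk

/-- Pulled back along `ℓ : V → Option ι`, this is the complete multipartite graph with parts
the fibres of `ℓ` over `some i`, together with the fibre over `none` as isolated vertices. -/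
def completeWithIsolated (ι : Type*) : SimpleGraph (Option ι) :=
  (⊤ : SimpleGraph ι).map Function.Embedding.some

@[simp]
theorem completeWithIsolated_adj {a b : Option ι} :
    (completeWithIsolated ι).Adj a b ↔ ∃ i j, i ≠ j ∧ a = some i ∧ b = some j := by
  rw [completeWithIsolated, map_adj]
  simp [eq_comm]

def Iso.comapOfFiberEquiv {L : Type*} (K : SimpleGraph L) {ℓ : V → L} {m : W → L}
    (e : ∀ c, {x // ℓ x = c} ≃ {y // m y = c}) : K.comap ℓ ≃g K.comap m where
  toEquiv := Equiv.ofFiberEquiv e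
  map_rel_iff' {_ _} := by simp only [comap_adj, Equiv.ofFiberEquiv_map]

theorem completeMultipartiteGraph_sum_bot_eq_comap (β : ι → Type*) (γ : Type*) :
    completeMultipartiteGraph β ⊕g (⊥ : SimpleGraph γ) =
      (completeWithIsolated ι).comap (Sum.elim (fun a => some a.1) fun _ => none) := by
  ext (a | a) (b | b) <;> simp

theorem exists_eq_comap_completeWithIsolated {G : SimpleGraph V} (f : completeGraph ι ↪g G)
    (hN : ∀ x, G.neighborSet x = ∅ ∨ ∃ i, G.neighborSet x = G.neighborSet (f i)) :
    ∃ ℓ : V → Option ι, G = (completeWithIsolated ι).comap ℓ ∧ ∀ i, ℓ (f i) = some i := by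
  classical
  have hinj : ∀ i j, G.neighborSet (f i) = G.neighborSet (f j) → i = j := fun i j h => by
    by_contra hij
    have : f j ∈ G.neighborSet (f i) := f.map_adj_iff.mpr hij
    exact G.irrefl (h ▸ this : f j ∈ G.neighborSet (f j))
  let ℓ : V → Option ι := fun x =>
    if h : ∃ i, G.neighborSet x = G.neighborSet (f i) then some h.choose else none
  have hℓ : ∀ x i, ℓ x = some i ↔ G.neighborSet x = G.neighborSet (f i) := fun x i => by
    by_cases h : ∃ i, G.neighborSet x = G.neighborSet (f i)
    · simp only [ℓ, dif_pos h, Option.some_inj]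
      exact ⟨fun hi => hi ▸ h.choose_spec, fun hx => hinj _ _ (h.choose_spec.symm.trans hx)⟩
    · simp only [ℓ, dif_neg h, reduceCtorEq, false_iff]
      exact fun hx => h ⟨i, hx⟩
  have hsome : ∀ x y, G.Adj x y → ∃ i, ℓ x = some i := fun x y hxy => by
    rcases hN x with h | ⟨i, hi⟩
    · exact absurd (h ▸ hxy : y ∈ (∅ : Set V)) (Set.notMem_empty y)
    · exact ⟨i, (hℓ x i).mpr hi⟩
  refine ⟨ℓ, ?_, fun i => (hℓ _ i).mpr rfl⟩
  ext x y
  simp only [comap_adj, completeWithIsolated_adj]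
  constructor
  · intro hxy
    obtain ⟨i, hi⟩ := hsome x y hxy
    obtain ⟨j, hj⟩ := hsome y x hxy.symm
    refine ⟨i, j, ?_, hi, hj⟩
    rintro rfl
    have : y ∈ G.neighborSet y := by rw [(hℓ y i).mp hj, ← (hℓ x i).mp hi]; exact hxy
    exact G.irrefl this
  · rintro ⟨i, j, hij, hi, hj⟩
    have hxj : f j ∈ G.neighborSet x := (hℓ x i).mp hi ▸ f.map_adj_iff.mpr hij
    have : x ∈ G.neighborSet y := (hℓ y j).mp hj ▸ hxj.symm
    exact this.symm

theorem exists_iso_completeMultipartiteGraph_sum_bot [Fintype V] [Fintype ι]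
    {G : SimpleGraph V} (f : completeGraph ι ↪g G)
    (hN : ∀ x, G.neighborSet x = ∅ ∨ ∃ i, G.neighborSet x = G.neighborSet (f i)) :
    ∃ (t : ι → ℕ) (r : ℕ), (∀ i, 1 ≤ t i) ∧ ∑ i, t i + r = Fintype.card V ∧
      Nonempty (G ≃g (completeMultipartiteGraph fun i => Fin (t i)) ⊕g
        (⊥ : SimpleGraph (Fin r))) := by
  classical
  obtain ⟨ℓ, hG, hf⟩ := exists_eq_comap_completeWithIsolated f hN
  set t := fun i => Fintype.card {x // ℓ x = some i}
  set r := Fintype.card {x // ℓ x = none}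
  have e : ∀ c, {x // ℓ x = c} ≃
      {y : (Σ i, Fin (t i)) ⊕ Fin r // Sum.elim (fun a => some a.1) (fun _ => none) y = c} :=
    fun c => Fintype.equivOfCardEq <| by
      simp only [Fintype.card_subtype, Finset.card_filter, Fintype.sum_sum_type,
        Fintype.sum_sigma]
      cases c <;> simp [t, r, Fintype.card_subtype]
  have iso : G ≃g (completeMultipartiteGraph fun i => Fin (t i)) ⊕g (⊥ : SimpleGraph (Fin r)) := by
    rw [hG, completeMultipartiteGraph_sum_bot_eq_comap]
    exact Iso.comapOfFiberEquiv _ e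
  refine ⟨t, r, fun i => Fintype.card_pos_iff.mpr ⟨⟨f i, hf i⟩⟩, ?_, ⟨iso⟩⟩
  simp [Fintype.card_congr iso.toEquiv]

section Rank

variable {G : SimpleGraph V} [DecidableRel G.Adj] [Fintype ι] [DecidableEq ι]

theorem neighborSet_eq_setOf_adjMatrix_eq_one (x : V) :
    G.neighborSet x = {z | G.adjMatrix ℝ x z = 1} := by
  ext z
  simp [adjMatrix_apply]

theorem sum_smul_adjMatrix_apply_of_embedding (f : completeGraph ι ↪g G) (g : ι → ℝ) (j : ι) :
    (∑ i, g i • G.adjMatrix ℝ (f i)) (f j) = ∑ i, g i - g j := by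
  simp [Finset.sum_apply, adjMatrix_apply, Finset.sum_ite, Finset.filter_ne',
    Finset.sum_erase_eq_sub]

theorem linearIndependent_adjMatrix_of_embedding (f : completeGraph ι ↪g G)
    (hι : Fintype.card ι ≠ 1) : LinearIndependent ℝ fun i => G.adjMatrix ℝ (f i) := by
  rw [Fintype.linearIndependent_iff]
  intro g hg
  have hconst : ∀ j, g j = ∑ i, g i := fun j => by
    have := congrFun hg (f j)
    rw [sum_smul_adjMatrix_apply_of_embedding, Pi.zero_apply] at this
    linarith
  have hsum : ∑ i, g i = Fintype.card ι * ∑ i, g i := by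
    conv_lhs => rw [Finset.sum_congr rfl fun j _ => hconst j]
    simp
  have hk : (Fintype.card ι : ℝ) - 1 ≠ 0 := sub_ne_zero.mpr (by exact_mod_cast hι)
  intro j
  rw [hconst j]
  exact (mul_eq_zero.mp (by linear_combination -hsum)).resolve_left hk

theorem neighborSet_eq_empty_or_eq_of_mem_span (f : completeGraph ι ↪g G)
    (hι : Fintype.card ι ≠ 1) {x : V}
    (hx : G.adjMatrix ℝ x ∈ Submodule.span ℝ (Set.range fun i => G.adjMatrix ℝ (f i))) :
    G.neighborSet x = ∅ ∨ ∃ j, G.neighborSet x = G.neighborSet (f j) := by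
  obtain ⟨g, hg⟩ := (Submodule.mem_span_range_iff_exists_fun ℝ).mp hx
  have hclique : ∀ j, G.adjMatrix ℝ x (f j) = ∑ i, g i - g j := fun j => by
    rw [← hg, sum_smul_adjMatrix_apply_of_embedding]
  have hdiag : ∑ i, g i * G.adjMatrix ℝ x (f i) = 0 := by
    simpa [Finset.sum_apply, adjMatrix_apply, G.adj_comm x] using congrFun hg x
  rcases eq_zero_or_eq_single_of_sum_sub_eq hι (fun j => by rw [adjMatrix_apply]; split_ifs <;> simp)
    hclique hdiag with rfl | ⟨j, rfl⟩
  · left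
    rw [neighborSet_eq_setOf_adjMatrix_eq_one, ← hg]
    simp
  · right
    refine ⟨j, ?_⟩
    rw [neighborSet_eq_setOf_adjMatrix_eq_one, neighborSet_eq_setOf_adjMatrix_eq_one, ← hg,
      Fintype.sum_eq_single j fun i hij => by simp [hij]]
    simp

theorem adjMatrix_mem_span_of_rank_eq [Fintype V] (f : completeGraph ι ↪g G)
    (hι : Fintype.card ι ≠ 1) (hrank : (G.adjMatrix ℝ).rank = Fintype.card ι) (x : V) :
    G.adjMatrix ℝ x ∈ Submodule.span ℝ (Set.range fun i => G.adjMatrix ℝ (f i)) := by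
  have hle : Submodule.span ℝ (Set.range fun i => G.adjMatrix ℝ (f i)) ≤
      Submodule.span ℝ (Set.range (G.adjMatrix ℝ).row) :=
    Submodule.span_mono (Set.range_comp_subset_range f (G.adjMatrix ℝ))
  rw [Submodule.eq_of_le_of_finrank_le hle (by rw [← rank_eq_finrank_span_row, hrank,
    finrank_span_eq_card (linearIndependent_adjMatrix_of_embedding f hι)])]
  exact Submodule.subset_span ⟨x, rfl⟩

theorem exists_iso_completeMultipartiteGraph_sum_bot_of_rank_eq [Fintype V]
    (f : completeGraph ι ↪g G) (hι : Fintype.card ι ≠ 1)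
    (hrank : (G.adjMatrix ℝ).rank = Fintype.card ι) :
    ∃ (t : ι → ℕ) (r : ℕ), (∀ i, 1 ≤ t i) ∧ ∑ i, t i + r = Fintype.card V ∧
      Nonempty (G ≃g (completeMultipartiteGraph fun i => Fin (t i)) ⊕g
        (⊥ : SimpleGraph (Fin r))) :=
  exists_iso_completeMultipartiteGraph_sum_bot f fun _ =>
    neighborSet_eq_empty_or_eq_of_mem_span f hι (adjMatrix_mem_span_of_rank_eq f hι hrank _)

end Rank

end SimpleGraph

namespace TwoPosEig

section Spectrum

variable {V : Type*} [Fintype V] [DecidableEq V] (G : SimpleGraph V)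

theorem adjMat_eq_adjMatrix [DecidableRel G.Adj] : adjMat G = G.adjMatrix ℝ := by
  unfold adjMat
  congr

theorem posCount_eq_card : posCount G = Fintype.card {i // 0 < eigs G i} := by
  unfold posCount
  convert Nat.card_eq_fintype_card (α := {i // 0 < eigs G i})

theorem nullCount_eq_card : nullCount G = Fintype.card {i // eigs G i = 0} := by
  unfold nullCount
  convert Nat.card_eq_fintype_card (α := {i // eigs G i = 0})

theorem sum_eigs_pow [DecidableRel G.Adj] (k : ℕ) :
    ∑ i, eigs G i ^ k = (G.adjMatrix ℝ ^ k).trace := by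
  rw [← adjMat_eq_adjMatrix, (adjMat_isHermitian G).trace_pow_eq_sum_eigenvalues_pow]
  rfl

end Spectrum

theorem nullity_n_sub_three {n : ℕ} (hn : 3 ≤ n) (G : SimpleGraph (Fin n))
    (h : nullCount G = n - 3) :
    posCount G = 1 ∧
    ∃ (t : Fin 3 → ℕ) (r : ℕ), (∀ i, 1 ≤ t i) ∧ (∑ i, t i) + r = n ∧
      Nonempty (G ≃g ((SimpleGraph.completeMultipartiteGraph fun i => Fin (t i)) ⊕g
        (⊥ : SimpleGraph (Fin r)))) := by
  classical
  have hsupp : Fintype.card {i // eigs G i ≠ 0} = 3 := by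
    rw [Fintype.card_subtype_compl, ← nullCount_eq_card, h, Fintype.card_fin]
    omega
  have hsum : ∑ i, eigs G i = 0 := by simpa using sum_eigs_pow G 1
  obtain ⟨hpos, hcube⟩ := card_pos_eq_one_and_sum_pow_three_pos hsupp hsum
    (sum_eigs_pow G 3 ▸ G.trace_adjMatrix_pow_nonneg 3)
  have hrank : (G.adjMatrix ℝ).rank = Fintype.card (Fin 3) := by
    rw [← adjMat_eq_adjMatrix, (adjMat_isHermitian G).rank_eq_card_non_zero_eigs,
      Fintype.card_fin]
    exact hsupp
  let triangle := SimpleGraph.topEmbeddingOfNotCliqueFree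
    (G.not_cliqueFree_three_of_trace_adjMatrix_pow_three_ne_zero (sum_eigs_pow G 3 ▸ hcube.ne'))
  obtain ⟨t, r, ht, hcard, hiso⟩ :=
    SimpleGraph.exists_iso_completeMultipartiteGraph_sum_bot_of_rank_eq triangle (by simp) hrank
  exact ⟨posCount_eq_card G ▸ hpos, t, r, ht, by simpa using hcard, hiso⟩

end TwoPosEig
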